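/- In any reachable stable configuration starting from k^ℓ labeled chips on the root, for every vertex v on layer t with 1 ≤ t ≤ ℓ+1, among the chips located at the layer-(ℓ+1) vertices that are descendants of v, the chip with the smallest label lies on the vertex obtained from v by taking the first (leftmost) child ℓ+1−t times, and the chip with the largest label lies on the vertex obtained from v by taking the k-th (rightmost) child ℓ+1−t times. -/
import Mathlib


/-- A firing step for `N` labeled chips on the infinite directed `k`-ary tree with
vertex set `{1, 2, 3, …}`, root `1`, where the `j`-th child (`1 ≤ j ≤ k`) of vertex `v`
is `k*(v-1)+j+1`.  A configuration assigns to each chip (element of `Fin N`,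
representing labels `1,…,N`) a vertex.  A step picks `k` chips `t 0 < t 1 < ⋯ < t (k-1)`
all on a common vertex `v` and sends the `j`-th smallest to the `j`-th child. -/
def FireStep (k N : ℕ) (c c' : Fin N → ℕ) : Prop :=
  ∃ (v : ℕ) (t : Fin k → Fin N),
    StrictMono t ∧
    (∀ j, c (t j) = v) ∧
    (∀ j : Fin k, c' (t j) = k * (v - 1) + (j : ℕ) + 2) ∧
    (∀ i : Fin N, (∀ j, i ≠ t j) → c' i = c i)

/-- Reachable from the initial configuration of `k^ℓ` chips all on the root. -/
def Reachable (k ℓ : ℕ) (c : Fin (k ^ ℓ) → ℕ) : Prop :=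
  Relation.ReflTransGen (FireStep k (k ^ ℓ)) (fun _ => 1) c

/-- A configuration is stable if every vertex holds fewer than `k` chips. -/
def Stable (k N : ℕ) (c : Fin N → ℕ) : Prop :=
  ∀ v : ℕ, (Finset.univ.filter (fun i => c i = v)).card < k

/-- `OnLayer k v m` : vertex `v` is on layer `m` of the infinite directed `k`-ary tree. -/
inductive OnLayer (k : ℕ) : ℕ → ℕ → Prop
  | root : OnLayer k 1 1
  | child (v m j : ℕ) (h1 : 1 ≤ j) (h2 : j ≤ k) (h : OnLayer k v m) :
      OnLayer k (k * (v - 1) + j + 1) (m + 1)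

/-- `Descendant k v w` : `w` is a (possibly improper) descendant of `v`. -/
inductive Descendant (k : ℕ) : ℕ → ℕ → Prop
  | refl (v : ℕ) : Descendant k v v
  | child (v w j : ℕ) (h1 : 1 ≤ j) (h2 : j ≤ k) (h : Descendant k v w) :
      Descendant k v (k * (w - 1) + j + 1)

/-! helpers -/

def par (k v : ℕ) : ℕ := (v - 2) / k + 1

lemma par_lt {k v : ℕ} (h : 2 ≤ v) : par k v < v := by
  have := Nat.div_le_self (v - 2) k
  unfold par; omega

def depth (k v : ℕ) : ℕ := if v ≤ 1 then 1 else depth k (par k v) + 1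
  termination_by v
  decreasing_by exact par_lt (by omega)

lemma depth_one (k : ℕ) : depth k 1 = 1 := by rw [depth]; simp

lemma par_child {k u j : ℕ} (hu : 1 ≤ u) (hj1 : 1 ≤ j) (hjk : j ≤ k) :
    par k (k * (u - 1) + j + 1) = u := by
  unfold par
  have h1 : k * (u - 1) + j + 1 - 2 = k * (u - 1) + (j - 1) := by omega
  rw [h1, Nat.mul_add_div (by omega), Nat.div_eq_of_lt (by omega)]
  omega

lemma child_lt {k u j : ℕ} (hu : 1 ≤ u) (hj1 : 1 ≤ j) (hjk : j ≤ k) :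
    u < k * (u - 1) + j + 1 := by
  have := Nat.one_mul (u-1) ▸ Nat.mul_le_mul_right (u-1) (show 1 ≤ k by omega)
  omega

lemma depth_child {k u j : ℕ} (hu : 1 ≤ u) (hj1 : 1 ≤ j) (hjk : j ≤ k) :
    depth k (k * (u - 1) + j + 1) = depth k u + 1 := by
  rw [depth, if_neg (by omega), par_child hu hj1 hjk]

lemma child_inj {k u u' j j' : ℕ} (hu : 1 ≤ u) (hu' : 1 ≤ u') (hj1 : 1 ≤ j)
    (hjk : j ≤ k) (hj1' : 1 ≤ j') (hjk' : j' ≤ k)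
    (h : k * (u - 1) + j + 1 = k * (u' - 1) + j' + 1) : u = u' ∧ j = j' := by
  have h2 : u = u' := by
    have := par_child (k := k) hu hj1 hjk
    rw [h, par_child hu' hj1' hjk'] at this; omega
  subst h2; omega

lemma desc_ge {k v w : ℕ} (hv : 1 ≤ v) (h : Descendant k v w) : v ≤ w := by
  induction h with
  | refl => exact le_refl _
  | child w j h1 h2 h ih => exact le_of_lt (lt_of_le_of_lt ih (child_lt (by omega) h1 h2))

lemma desc_one {k v : ℕ} (hv : 1 ≤ v) (h : Descendant k v 1) : v = 1 :=
  le_antisymm (desc_ge hv h) hv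

lemma desc_inv {k v x : ℕ} (h : Descendant k v x) :
    ∀ u j, 1 ≤ v → 1 ≤ u → 1 ≤ j → j ≤ k → x = k * (u - 1) + j + 1 →
      Descendant k v u ∨ v = x := by
  induction h with
  | refl => exact fun u j _ _ _ _ hx => Or.inr rfl
  | child w j' h1 h2 h ih =>
    intro u j hv hu hj1 hjk hx
    have hw : 1 ≤ w := le_trans hv (desc_ge hv h)
    obtain ⟨h3, h4⟩ := child_inj hw hu h1 h2 hj1 hjk hx
    exact Or.inl (h3 ▸ h)

lemma depth_pos (k v : ℕ) : 1 ≤ depth k v := by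
  rw [depth]; split <;> omega

lemma depth_onLayer {k : ℕ} (hk : 1 ≤ k) : ∀ v, 1 ≤ v → OnLayer k v (depth k v) := by
  intro v
  induction v using Nat.strong_induction_on with
  | _ v ih =>
    intro hv
    rcases Nat.lt_or_ge v 2 with h | h
    · have : v = 1 := by omega
      subst this; rw [depth_one]; exact OnLayer.root
    · have hp1 : 1 ≤ par k v := Nat.le_add_left 1 _
      have hp : par k v - 1 = (v - 2) / k := by simp [par]
      have hrec : v = k * (par k v - 1) + ((v - 2) % k + 1) + 1 := by
        rw [hp]
        have := Nat.div_add_mod (v - 2) k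
        omega
      have hj : (v - 2) % k + 1 ≤ k := by
        have := Nat.mod_lt (v - 2) (show 0 < k by omega); omega
      have hd : depth k v = depth k (par k v) + 1 := by rw [depth, if_neg (by omega)]
      rw [hd]
      nth_rewrite 1 [hrec]
      exact OnLayer.child _ _ _ (by omega) hj (ih _ (par_lt h) hp1)

lemma onLayer_depth {k v m : ℕ} (h : OnLayer k v m) : depth k v = m ∧ 1 ≤ v := by
  induction h with
  | root => exact ⟨depth_one k, le_refl 1⟩
  | child v m j h1 h2 h ih => exact ⟨by rw [depth_child ih.2 h1 h2, ih.1], by omega⟩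

lemma reach_pos {k ℓ : ℕ} {c : Fin (k ^ ℓ) → ℕ} (hr : Reachable k ℓ c) :
    ∀ i, 1 ≤ c i := by
  induction hr with
  | refl => intro i; exact le_refl 1
  | tail hab hbc ih =>
    obtain ⟨u, t, hmono, hat, hchild, hother⟩ := hbc
    intro i
    by_cases hf : ∀ j, i ≠ t j
    · rw [hother i hf]; exact ih i
    · push_neg at hf; obtain ⟨m, rfl⟩ := hf
      rw [hchild m]; omega

lemma reach_min {k ℓ : ℕ} (hk : 2 ≤ k) {c : Fin (k ^ ℓ) → ℕ} (hr : Reachable k ℓ c) :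
    ∀ v, 1 ≤ v → ∀ i, Descendant k v (c i) → (∀ j, Descendant k v (c j) → i ≤ j) →
      ∃ n, c i = (fun w => k * (w - 1) + 2)^[n] v := by
  induction hr with
  | refl =>
    intro v hv i hdi _
    have : v = 1 := desc_one hv hdi
    exact ⟨0, by simp [this]⟩
  | @tail b c' hab hbc ih =>
    have hbpos : ∀ i, 1 ≤ b i := reach_pos hab
    obtain ⟨u, t, hmono, hat, hchild, hother⟩ := hbc
    have hu : 1 ≤ u := hat ⟨0, by omega⟩ ▸ hbpos (t ⟨0, by omega⟩)
    intro v hv i hdi hmin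
    by_cases hdu : Descendant k v u
    · -- all fired chips stay in the subtree
      have hiff : ∀ j, Descendant k v (b j) ↔ Descendant k v (c' j) := by
        intro j
        by_cases hf : ∀ m, j ≠ t m
        · rw [hother j hf]
        · push_neg at hf; obtain ⟨m, rfl⟩ := hf
          constructor
          · intro _
            rw [hchild m]
            have : k * (u - 1) + (m : ℕ) + 2 = k * (u - 1) + ((m : ℕ) + 1) + 1 := by omega
            rw [this]
            exact Descendant.child v u _ (by omega) (by omega : (m : ℕ) + 1 ≤ k) hdu
          · intro _; rw [hat m]; exact hdu
      have hdbi : Descendant k v (b i) := (hiff i).2 hdi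
      have hminb : ∀ j, Descendant k v (b j) → i ≤ j := fun j hj => hmin j ((hiff j).1 hj)
      obtain ⟨n, hn⟩ := ih v hv i hdbi hminb
      by_cases hf : ∀ m, i ≠ t m
      · exact ⟨n, by rw [hother i hf]; exact hn⟩
      · push_neg at hf; obtain ⟨m, him⟩ := hf
        have h0 : Descendant k v (c' (t ⟨0, by omega⟩)) :=
          (hiff _).1 (by rw [hat]; exact hdu)
        have hle : i ≤ t ⟨0, by omega⟩ := hmin _ h0
        have hge : t ⟨0, by omega⟩ ≤ t m := hmono.monotone (by exact Fin.mk_le_of_le_val (by omega))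
        have hieq : i = t ⟨0, by omega⟩ := le_antisymm hle (him ▸ hge)
        refine ⟨n + 1, ?_⟩
        rw [hieq, hchild, Function.iterate_succ_apply']
        have hbu : (fun w => k * (w - 1) + 2)^[n] v = u := by
          rw [← hn, hieq, hat]
        rw [hbu]
        simp
    · by_cases hf : ∀ m, i ≠ t m
      · have hci : c' i = b i := hother i hf
        have hdbi : Descendant k v (b i) := hci ▸ hdi
        have hminb : ∀ j, Descendant k v (b j) → i ≤ j := by
          intro j hj
          by_cases hg : ∀ m, j ≠ t m
          · exact hmin j ((hother j hg) ▸ hj)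
          · exfalso; push_neg at hg; obtain ⟨m, rfl⟩ := hg
            rw [hat m] at hj; exact hdu hj
        obtain ⟨n, hn⟩ := ih v hv i hdbi hminb
        exact ⟨n, hci ▸ hn⟩
      · push_neg at hf; obtain ⟨m, rfl⟩ := hf
        have hx : c' (t m) = k * (u - 1) + ((m : ℕ) + 1) + 1 := by rw [hchild m]; omega
        rcases desc_inv (hx ▸ hdi) u ((m : ℕ) + 1) hv hu (by omega)
            (by omega : (m : ℕ) + 1 ≤ k) rfl with h | h
        · exact absurd h hdu
        · exact ⟨0, by rw [Function.iterate_zero_apply, h, ← hx]⟩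

lemma reach_max {k ℓ : ℕ} (hk : 2 ≤ k) {c : Fin (k ^ ℓ) → ℕ} (hr : Reachable k ℓ c) :
    ∀ v, 1 ≤ v → ∀ i, Descendant k v (c i) → (∀ j, Descendant k v (c j) → j ≤ i) →
      ∃ n, c i = (fun w => k * (w - 1) + k + 1)^[n] v := by
  induction hr with
  | refl =>
    intro v hv i hdi _
    have : v = 1 := desc_one hv hdi
    exact ⟨0, by simp [this]⟩
  | @tail b c' hab hbc ih =>
    have hbpos : ∀ i, 1 ≤ b i := reach_pos hab
    obtain ⟨u, t, hmono, hat, hchild, hother⟩ := hbc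
    have hu : 1 ≤ u := hat ⟨0, by omega⟩ ▸ hbpos (t ⟨0, by omega⟩)
    intro v hv i hdi hmax
    by_cases hdu : Descendant k v u
    · have hiff : ∀ j, Descendant k v (b j) ↔ Descendant k v (c' j) := by
        intro j
        by_cases hf : ∀ m, j ≠ t m
        · rw [hother j hf]
        · push_neg at hf; obtain ⟨m, rfl⟩ := hf
          constructor
          · intro _
            rw [hchild m]
            have : k * (u - 1) + (m : ℕ) + 2 = k * (u - 1) + ((m : ℕ) + 1) + 1 := by omega
            rw [this]
            exact Descendant.child v u _ (by omega) (by omega : (m : ℕ) + 1 ≤ k) hdu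
          · intro _; rw [hat m]; exact hdu
      have hdbi : Descendant k v (b i) := (hiff i).2 hdi
      have hmaxb : ∀ j, Descendant k v (b j) → j ≤ i := fun j hj => hmax j ((hiff j).1 hj)
      obtain ⟨n, hn⟩ := ih v hv i hdbi hmaxb
      by_cases hf : ∀ m, i ≠ t m
      · exact ⟨n, by rw [hother i hf]; exact hn⟩
      · push_neg at hf; obtain ⟨m, him⟩ := hf
        have h0 : Descendant k v (c' (t ⟨k - 1, by omega⟩)) :=
          (hiff _).1 (by rw [hat]; exact hdu)
        have hle : t ⟨k - 1, by omega⟩ ≤ i := hmax _ h0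
        have hge : t m ≤ t ⟨k - 1, by omega⟩ :=
          hmono.monotone (Fin.le_def.mpr (by have := m.isLt; simp; omega))
        have hieq : i = t ⟨k - 1, by omega⟩ := le_antisymm (him ▸ hge) hle
        refine ⟨n + 1, ?_⟩
        rw [hieq, hchild, Function.iterate_succ_apply']
        have hbu : (fun w => k * (w - 1) + k + 1)^[n] v = u := by
          rw [← hn, hieq, hat]
        rw [hbu]
        simp; omega
    · by_cases hf : ∀ m, i ≠ t m
      · have hci : c' i = b i := hother i hf
        have hdbi : Descendant k v (b i) := hci ▸ hdi
        have hmaxb : ∀ j, Descendant k v (b j) → j ≤ i := by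
          intro j hj
          by_cases hg : ∀ m, j ≠ t m
          · exact hmax j ((hother j hg) ▸ hj)
          · exfalso; push_neg at hg; obtain ⟨m, rfl⟩ := hg
            rw [hat m] at hj; exact hdu hj
        obtain ⟨n, hn⟩ := ih v hv i hdbi hmaxb
        exact ⟨n, hci ▸ hn⟩
      · push_neg at hf; obtain ⟨m, rfl⟩ := hf
        have hx : c' (t m) = k * (u - 1) + ((m : ℕ) + 1) + 1 := by rw [hchild m]; omega
        rcases desc_inv (hx ▸ hdi) u ((m : ℕ) + 1) hv hu (by omega)
            (by omega : (m : ℕ) + 1 ≤ k) rfl with h | h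
        · exact absurd h hdu
        · exact ⟨0, by rw [Function.iterate_zero_apply, h, ← hx]⟩

def cnt {N : ℕ} (c : Fin N → ℕ) (w : ℕ) : ℕ :=
  (Finset.univ.filter (fun i => c i = w)).card

lemma reach_counts {k ℓ : ℕ} (hk : 2 ≤ k) {c : Fin (k ^ ℓ) → ℕ} (hr : Reachable k ℓ c) :
    ∃ F : ℕ → ℕ, (cnt c 1 + k * F 1 = k ^ ℓ) ∧
      ∀ v, 2 ≤ v → cnt c v + k * F v = F (par k v) := by
  induction hr with
  | refl =>
    refine ⟨fun _ => 0, ?_, ?_⟩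
    · simp [cnt]
    · intro v hv
      simp only [cnt, mul_zero, add_zero]
      rw [Finset.filter_false_of_mem (fun i _ => by omega), Finset.card_empty]
  | @tail b c' hab hbc ih =>
    obtain ⟨F, hF1, hF2⟩ := ih
    have hbpos : ∀ i, 1 ≤ b i := reach_pos hab
    obtain ⟨u, t, hmono, hat, hchild, hother⟩ := hbc
    have hu : 1 ≤ u := hat ⟨0, by omega⟩ ▸ hbpos (t ⟨0, by omega⟩)
    -- split the chip count into fired chips and non-fired chips
    have hsplit : ∀ (f : Fin (k ^ ℓ) → ℕ) (w : ℕ),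
        cnt f w = (∑ j : Fin k, if f (t j) = w then 1 else 0) +
          ∑ i ∈ Finset.univ.filter (fun i => ∀ j, i ≠ t j), if f i = w then 1 else 0 := by
      intro f w
      rw [cnt, Finset.card_filter,
        ← Finset.sum_filter_add_sum_filter_not Finset.univ (fun i => ∃ j, i = t j)]
      congr 1
      · rw [show Finset.univ.filter (fun i => ∃ j, i = t j) = Finset.image t Finset.univ by
          ext i; simp [eq_comm]]
        rw [Finset.sum_image (fun a _ b _ h => hmono.injective h)]
      · congr 1
        ext i
        simp
    have hkey : ∀ w, cnt c' w + (∑ j : Fin k, if b (t j) = w then 1 else 0) =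
        cnt b w + (∑ j : Fin k, if c' (t j) = w then 1 else 0) := by
      intro w
      rw [hsplit c' w, hsplit b w]
      have : ∀ i ∈ Finset.univ.filter (fun i => ∀ j, i ≠ t j),
          (if c' i = w then 1 else 0) = (if b i = w then 1 else 0) := by
        intro i hi
        rw [hother i (Finset.mem_filter.mp hi).2]
      rw [Finset.sum_congr rfl this]
      ring
    have hSb : ∀ w, (∑ j : Fin k, if b (t j) = w then 1 else 0) =
        if u = w then k else 0 := by
      intro w
      simp only [hat]
      by_cases h : u = w <;> simp [h]
    -- value of the post-fire sum at various vertices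
    have hlt : ∀ j : Fin k, u < k * (u - 1) + (j : ℕ) + 2 := by
      intro j
      have := child_lt (k := k) (j := (j : ℕ) + 1) hu (by omega) (by omega)
      omega
    have hSc'u : (∑ j : Fin k, if c' (t j) = u then 1 else 0) = 0 := by
      apply Finset.sum_eq_zero
      intro j _
      rw [hchild j, if_neg (by have := hlt j; omega)]
    have hSc'1 : (∑ j : Fin k, if c' (t j) = 1 then 1 else 0) = 0 := by
      apply Finset.sum_eq_zero
      intro j _
      rw [hchild j, if_neg (by omega)]
    have hSc'far : ∀ w, 2 ≤ w → par k w ≠ u →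
        (∑ j : Fin k, if c' (t j) = w then 1 else 0) = 0 := by
      intro w hw hpw
      apply Finset.sum_eq_zero
      intro j _
      rw [hchild j, if_neg]
      intro h
      apply hpw
      rw [← h, show k * (u - 1) + (j : ℕ) + 2 = k * (u - 1) + ((j : ℕ) + 1) + 1 by omega,
        par_child hu (by omega) (by have := j.isLt; omega)]
    have hSc'child : ∀ w, 2 ≤ w → par k w = u →
        (∑ j : Fin k, if c' (t j) = w then 1 else 0) = 1 := by
      intro w hw hpw
      have hkpos : 0 < k := by omega
      have hdm := Nat.div_add_mod (w - 2) k
      have hdiv : (w - 2) / k = u - 1 := by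
        have : (w - 2) / k + 1 = u := hpw
        omega
      have hweq : w = k * (u - 1) + (w - 2) % k + 2 := by
        rw [← hdiv]; omega
      have hmlt : (w - 2) % k < k := Nat.mod_lt _ hkpos
      have hfun : ∀ j : Fin k, (if c' (t j) = w then (1:ℕ) else 0) =
          if j = (⟨(w - 2) % k, hmlt⟩ : Fin k) then 1 else 0 := by
        intro j
        rw [hchild j]
        by_cases h : j = (⟨(w - 2) % k, hmlt⟩ : Fin k)
        · rw [if_pos h, if_pos]
          rw [h]
          simp only [Fin.val_mk]
          omega
        · rw [if_neg h, if_neg]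
          intro he
          exact h (Fin.ext (by simp only [Fin.val_mk]; omega))
      rw [Finset.sum_congr rfl (fun j _ => hfun j)]
      simp
    refine ⟨fun w => if w = u then F w + 1 else F w, ?_, ?_⟩
    · -- root equation
      have h2 := hkey 1
      rw [hSb 1, hSc'1, add_zero] at h2
      have hms : k * (F 1 + 1) = k * F 1 + k := Nat.mul_succ k (F 1)
      beta_reduce
      split_ifs at h2 ⊢ <;> omega
    · intro v hv
      have hScv : (∑ j : Fin k, if c' (t j) = v then 1 else 0) =
          if par k v = u then 1 else 0 := by
        by_cases hp : par k v = u
        · rw [hSc'child v hv hp, if_pos hp]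
        · rw [hSc'far v hv hp, if_neg hp]
      have h2 := hkey v
      rw [hSb v, hScv] at h2
      have hpar_lt := par_lt (k := k) hv
      have hF2v := hF2 v hv
      have hms : k * (F v + 1) = k * F v + k := Nat.mul_succ k (F v)
      beta_reduce
      split_ifs at h2 ⊢ <;> omega

lemma stable_layer {k ℓ : ℕ} (hk : 2 ≤ k) (hℓ : 1 ≤ ℓ) {c : Fin (k ^ ℓ) → ℕ}
    (hr : Reachable k ℓ c) (hs : Stable k (k ^ ℓ) c) :
    ∀ i, depth k (c i) = ℓ + 1 := by
  obtain ⟨F, hF1, hF2⟩ := reach_counts hk hr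
  set G : ℕ → ℕ := fun s => if s ≤ ℓ + 1 then k ^ (ℓ + 1 - s) else 0 with hG
  -- key per-vertex resolution using stability
  have solve : ∀ v, cnt c v + k * F v = G (depth k v) → cnt c v < k →
      (cnt c v = if depth k v = ℓ + 1 then 1 else 0) ∧ F v = G (depth k v + 1) := by
    intro v heq hlt
    set d := depth k v with hd
    rcases le_or_gt d ℓ with h | h
    · have hGd : G d = k * k ^ (ℓ - d) := by
        rw [hG]
        simp only [if_pos (by omega : d ≤ ℓ + 1)]
        rw [show ℓ + 1 - d = (ℓ - d) + 1 by omega, pow_succ']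
      rw [hGd] at heq
      set M := k ^ (ℓ - d) with hM
      have hFM : F v ≤ M := by
        by_contra hc
        push_neg at hc
        have := Nat.mul_le_mul_left k hc
        rw [Nat.mul_succ] at this
        omega
      have hFM' : F v = M := by
        by_contra hc
        have h2 : F v + 1 ≤ M := by omega
        have := Nat.mul_le_mul_left k h2
        rw [Nat.mul_succ] at this
        omega
      constructor
      · rw [if_neg (by omega)]
        rw [hFM'] at heq
        omega
      · rw [hG]
        simp only [if_pos (by omega : d + 1 ≤ ℓ + 1)]
        rw [show ℓ + 1 - (d + 1) = ℓ - d by omega]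
        exact hFM'
    · rcases eq_or_lt_of_le (show ℓ + 1 ≤ d by omega) with h2 | h2
      · have hGd : G d = 1 := by rw [hG]; simp only [if_pos (le_of_eq h2.symm)]; rw [← h2]; simp
        rw [hGd] at heq
        have hF0 : F v = 0 := by
          by_contra hc
          have : 1 ≤ F v := by omega
          have := Nat.mul_le_mul_left k this
          rw [mul_one] at this
          omega
        constructor
        · rw [if_pos h2.symm]; rw [hF0] at heq; omega
        · simp only [hG]
          rw [if_neg (by omega : ¬ d + 1 ≤ ℓ + 1)]
          exact hF0
      · have hGd : G d = 0 := by rw [hG]; simp only [if_neg (by omega : ¬ d ≤ ℓ + 1)]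
        rw [hGd] at heq
        have hF0 : F v = 0 := by
          by_contra hc
          have : 1 ≤ F v := by omega
          have := Nat.mul_le_mul_left k this
          rw [mul_one] at this
          omega
        constructor
        · rw [if_neg (by omega)]; omega
        · simp only [hG]
          rw [if_neg (by omega : ¬ d + 1 ≤ ℓ + 1)]
          exact hF0
  have main : ∀ v, 1 ≤ v →
      (cnt c v = if depth k v = ℓ + 1 then 1 else 0) ∧ F v = G (depth k v + 1) := by
    intro v
    induction v using Nat.strong_induction_on with
    | _ v ih =>
      intro hv
      rcases Nat.lt_or_ge v 2 with h | h
      · have hv1 : v = 1 := by omega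
        subst hv1
        apply solve
        · rw [depth_one, hG]
          simp only [if_pos (by omega : 1 ≤ ℓ + 1)]
          rw [show ℓ + 1 - 1 = ℓ by omega]
          exact hF1
        · exact hs 1
      · have hp1 : 1 ≤ par k v := Nat.le_add_left 1 _
        have hdv : depth k v = depth k (par k v) + 1 := by rw [depth, if_neg (by omega)]
        have hpar := (ih _ (par_lt h) hp1).2
        apply solve
        · rw [hdv, ← hpar]
          exact hF2 v h
        · exact hs v
  intro i
  by_contra hne
  have hpos : 1 ≤ c i := reach_pos hr i
  have h1 := (main (c i) hpos).1
  rw [if_neg hne] at h1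
  have : i ∈ Finset.univ.filter (fun j => c j = c i) := by simp
  have : 0 < cnt c (c i) := Finset.card_pos.mpr ⟨i, this⟩
  omega

lemma iterL_depth {k : ℕ} (hk : 1 ≤ k) :
    ∀ n v, 1 ≤ v → depth k ((fun w => k * (w - 1) + 2)^[n] v) = depth k v + n ∧
      1 ≤ (fun w => k * (w - 1) + 2)^[n] v := by
  intro n
  induction n with
  | zero => intro v hv; simp [hv]
  | succ n ih =>
    intro v hv
    obtain ⟨hd, hx⟩ := ih v hv
    rw [Function.iterate_succ_apply']
    set x := (fun w => k * (w - 1) + 2)^[n] v with hxdef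
    constructor
    · show depth k (k * (x - 1) + 2) = depth k v + (n + 1)
      rw [show k * (x - 1) + 2 = k * (x - 1) + 1 + 1 by omega,
        depth_child hx (le_refl 1) hk, hd]
      omega
    · show 1 ≤ k * (x - 1) + 2
      omega

lemma iterR_depth {k : ℕ} (hk : 1 ≤ k) :
    ∀ n v, 1 ≤ v → depth k ((fun w => k * (w - 1) + k + 1)^[n] v) = depth k v + n ∧
      1 ≤ (fun w => k * (w - 1) + k + 1)^[n] v := by
  intro n
  induction n with
  | zero => intro v hv; simp [hv]
  | succ n ih =>
    intro v hv
    obtain ⟨hd, hx⟩ := ih v hv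
    rw [Function.iterate_succ_apply']
    set x := (fun w => k * (w - 1) + k + 1)^[n] v with hxdef
    constructor
    · show depth k (k * (x - 1) + k + 1) = depth k v + (n + 1)
      rw [depth_child hx hk (le_refl k), hd]
      omega
    · show 1 ≤ k * (x - 1) + k + 1
      omega

/-- In any reachable stable configuration from `k^ℓ` chips on the root, for any vertex
`v` on layer `t` (`1 ≤ t ≤ ℓ+1`), among the chips located on layer-`(ℓ+1)` descendants
of `v`, the smallest-labeled chip lies on the vertex obtained from `v` by taking the
leftmost child `ℓ+1-t` times, and the largest-labeled chip lies on the vertex obtained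
from `v` by taking the rightmost child `ℓ+1-t` times. -/
theorem stmt1 (k ℓ : ℕ) (hk : 2 ≤ k) (hℓ : 1 ≤ ℓ)
    (c : Fin (k ^ ℓ) → ℕ) (hr : Reachable k ℓ c) (hs : Stable k (k ^ ℓ) c)
    (t : ℕ) (ht1 : 1 ≤ t) (ht2 : t ≤ ℓ + 1) (v : ℕ) (hv : OnLayer k v t) :
    (∀ i : Fin (k ^ ℓ),
      (Descendant k v (c i) ∧ OnLayer k (c i) (ℓ + 1) ∧
        ∀ j : Fin (k ^ ℓ), Descendant k v (c j) ∧ OnLayer k (c j) (ℓ + 1) → i ≤ j) →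
      c i = (fun w => k * (w - 1) + 2)^[ℓ + 1 - t] v) ∧
    (∀ i : Fin (k ^ ℓ),
      (Descendant k v (c i) ∧ OnLayer k (c i) (ℓ + 1) ∧
        ∀ j : Fin (k ^ ℓ), Descendant k v (c j) ∧ OnLayer k (c j) (ℓ + 1) → j ≤ i) →
      c i = (fun w => k * (w - 1) + k + 1)^[ℓ + 1 - t] v) := by
  have hlayer := stable_layer hk hℓ hr hs
  have hall : ∀ i, OnLayer k (c i) (ℓ + 1) := by
    intro i
    have := depth_onLayer (by omega : 1 ≤ k) (c i) (reach_pos hr i)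
    rwa [hlayer i] at this
  obtain ⟨hvd, hv1⟩ := onLayer_depth hv
  constructor
  · intro i ⟨hd, hl, hmin⟩
    have hmin' : ∀ j, Descendant k v (c j) → i ≤ j := fun j hj => hmin j ⟨hj, hall j⟩
    obtain ⟨n, hn⟩ := reach_min hk hr v hv1 i hd hmin'
    have hdL := (iterL_depth (by omega : 1 ≤ k) n v hv1).1
    have hdi : depth k (c i) = ℓ + 1 := hlayer i
    rw [hn, hdL, hvd] at hdi
    rw [hn, show n = ℓ + 1 - t by omega]
  · intro i ⟨hd, hl, hmax⟩
    have hmax' : ∀ j, Descendant k v (c j) → j ≤ i := fun j hj => hmax j ⟨hj, hall j⟩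
    obtain ⟨n, hn⟩ := reach_max hk hr v hv1 i hd hmax'
    have hdR := (iterR_depth (by omega : 1 ≤ k) n v hv1).1
    have hdi : depth k (c i) = ℓ + 1 := hlayer i
    rw [hn, hdR, hvd] at hdi
    rw [hn, show n = ℓ + 1 - t by omega]
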